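/- The sets U_FM(T,E) and X(T,E) are disjoint: U_FM(T,E) ∩ X(T,E) = ∅. -/

import Mathlib

open MeasureTheory Filter Topology

/-- A rooted tree: a denumerable vertex set `V`, a level function (distance to the root),
a parent map, such that every level is finite and every vertex has at least two children,
together with a fixed enumeration of the vertices. -/
structure TreeSystem where
  V : Type
  level : V → ℕ
  root : V
  level_root : level root = 0
  root_unique : ∀ x, level x = 0 → x = root
  parent : V → V
  level_parent : ∀ x, level x ≠ 0 → level (parent x) + 1 = level x
  levels_finite : ∀ n, {x | level x = n}.Finite
  two_children : ∀ x, ∃ y z, y ≠ z ∧ parent y = x ∧ level y = level x + 1 ∧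
    parent z = x ∧ level z = level x + 1
  enum : ℕ → V
  enum_bij : Function.Bijective enum

/-- The number of elements of `A ∩ {1, …, N}`. -/
noncomputable def partialCount (A : Set ℕ) (N : ℕ) : ℝ :=
  ∑ n ∈ Finset.Icc 1 N, A.indicator (fun _ => (1 : ℝ)) n

/-- The lower density of a set of positive integers. -/
noncomputable def lowerDensity (A : Set ℕ) : ℝ :=
  liminf (fun N : ℕ => partialCount A N / N) atTop

/-- The upper density of a set of positive integers. -/
noncomputable def upperDensity (A : Set ℕ) : ℝ :=
  limsup (fun N : ℕ => partialCount A N / N) atTop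

/-- The (translation invariant) product metric `d̂` on `E ^ ℕ` built from a metric `d` on `E`;
it induces the product topology. -/
noncomputable def dHat {E : Type} (d : E → E → ℝ) (x y : ℕ → E) : ℝ :=
  ∑' n : ℕ, (1 / 2 : ℝ) ^ (n + 1) * (d (x n) (y n) / (1 + d (x n) (y n)))

namespace TreeSystem

variable (t : TreeSystem)

/-- The set `S(x)` of children of a vertex `x`. -/
def children (x : t.V) : Set t.V := {y | t.parent y = x ∧ t.level y = t.level x + 1}

/-- The boundary `∂T`: the set of infinite geodesics starting at the root. -/
def Geodesic : Type := {e : ℕ → t.V // e 0 = t.root ∧ ∀ n, e (n + 1) ∈ t.children (e n)}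

/-- The boundary sector `B_x` of a vertex `x`. -/
def Bx (x : t.V) : Set t.Geodesic := {e | e.1 (t.level x) = x}

/-- `𝓜ₙ`: the σ-algebra on `∂T` generated by the level-`n` boundary sectors. -/
def Mn (n : ℕ) : MeasurableSpace t.Geodesic :=
  MeasurableSpace.generateFrom {B | ∃ x, t.level x = n ∧ B = t.Bx x}

/-- The σ-algebra on `∂T` generated by `⋃ n, 𝓜ₙ`.  Its completion `𝓜` with respect to the
measure `ℙ` is realized below via null-measurable sets. -/
instance instMeasurableSpaceGeodesic : MeasurableSpace t.Geodesic := ⨆ n, t.Mn n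

/-- `pathProb q n x = ∏_{j=0}^{n-1} q(y_j, y_{j+1})` along the geodesic
`root = y_0, y_1, …, y_n = x` from the root to `x` (for a vertex `x` of level `n`). -/
def pathProb (q : t.V → t.V → ℝ) : ℕ → t.V → ℝ
  | 0, _ => 1
  | n + 1, x => pathProb q n (t.parent x) * q (t.parent x) x

/-- `h : ∂T → E` is `𝓜`-measurable, `𝓜` being the completion of `⨆ n, 𝓜ₙ` w.r.t. `ℙ`:
preimages of open sets are in the completed σ-algebra. -/
def MMeas {E : Type} [TopologicalSpace E] (ℙ : Measure t.Geodesic)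
    (h : t.Geodesic → E) : Prop :=
  ∀ V : Set E, IsOpen V → NullMeasurableSet (h ⁻¹' V) ℙ

/-- The metric `P(ψ,φ) = ∫ d(ψ e, φ e)/(1 + d(ψ e, φ e)) dℙ(e)` of `L⁰(∂T, E)`
(convergence in probability), as a pseudometric on representatives, for a metric `d` on `E`. -/
noncomputable def L0dist {E : Type} (ℙ : Measure t.Geodesic) (d : E → E → ℝ)
    (ψ φ : t.Geodesic → E) : ℝ :=
  ∫ e, d (ψ e) (φ e) / (1 + d (ψ e) (φ e)) ∂ℙ

/-- Open subsets of `L⁰(∂T, E)`, encoded as sets of `𝓜`-measurable representatives. -/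
def IsOpenL0 {E : Type} [TopologicalSpace E] (ℙ : Measure t.Geodesic) (d : E → E → ℝ)
    (V : Set (t.Geodesic → E)) : Prop :=
  (∀ ψ ∈ V, t.MMeas ℙ ψ) ∧
    ∀ ψ ∈ V, ∃ ε > 0, ∀ φ, t.MMeas ℙ φ → t.L0dist ℙ d ψ φ < ε → φ ∈ V

/-- Dense subsets of `L⁰(∂T, E)`. -/
def DenseL0 {E : Type} [TopologicalSpace E] (ℙ : Measure t.Geodesic) (d : E → E → ℝ)
    (V : Set (t.Geodesic → E)) : Prop :=
  ∀ ψ, t.MMeas ℙ ψ → ∀ ε > 0, ∃ φ ∈ V, t.L0dist ℙ d ψ φ < ε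

/-- (Generalized) harmonic functions with respect to the weights `w`:
`f(x) = ∑_{y ∈ S(x)} w(x,y) • f(y)` for every vertex `x`. -/
def Harmonic {E : Type} [AddCommMonoid E] [Module ℂ E] (w : t.V → t.V → ℂ)
    (f : t.V → E) : Prop :=
  ∀ x, f x = ∑ᶠ y ∈ t.children x, w x y • f y

/-- The boundary values `ωₙ(f)(e) = f(z)`, `z` the unique vertex of `e` at level `n`. -/
def omega {E : Type} (f : t.V → E) (n : ℕ) : t.Geodesic → E := fun e => f (e.1 n)

/-- The metric `ρ` of pointwise convergence on `E^T` (for a metric `d` on `E`),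
defined through the fixed enumeration of the vertices. -/
noncomputable def rho {E : Type} (d : E → E → ℝ) (f g : t.V → E) : ℝ :=
  ∑' n : ℕ, (1 / 2 : ℝ) ^ (n + 1) *
    (d (f (t.enum n)) (g (t.enum n)) / (1 + d (f (t.enum n)) (g (t.enum n))))

/-- A set of functions on `T` is dense in `H(T, E)`. -/
def DenseInH {E : Type} [AddCommMonoid E] [Module ℂ E] (d : E → E → ℝ)
    (w : t.V → t.V → ℂ) (F : Set (t.V → E)) : Prop :=
  ∀ h, t.Harmonic w h → ∀ ε > 0, ∃ f ∈ F, t.rho d f h < ε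

/-- Open subsets of `H(T,E)` (w.r.t. the metric `ρ`). -/
def IsOpenH {E : Type} [AddCommMonoid E] [Module ℂ E] (d : E → E → ℝ)
    (w : t.V → t.V → ℂ) (U : Set (t.V → E)) : Prop :=
  (∀ f ∈ U, t.Harmonic w f) ∧
    ∀ f ∈ U, ∃ ε > 0, ∀ g, t.Harmonic w g → t.rho d f g < ε → g ∈ U

/-- Universal harmonic functions, `f ∈ U(T,E)`: `f` is harmonic and the sequence
`(ωₙ(f))_{n ≥ 1}` is dense in `L⁰(∂T, E)`. -/
def Universal {E : Type} [TopologicalSpace E] [AddCommMonoid E] [Module ℂ E]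
    (ℙ : Measure t.Geodesic) (d : E → E → ℝ) (w : t.V → t.V → ℂ)
    (f : t.V → E) : Prop :=
  t.Harmonic w f ∧
    ∀ ψ, t.MMeas ℙ ψ → ∀ ε > 0, ∃ n, 1 ≤ n ∧ t.L0dist ℙ d (t.omega f n) ψ < ε

/-- Frequently universal harmonic functions, `f ∈ U_FM(T,E)`: for every nonempty open
`V ⊆ L⁰(∂T,E)` the set `{n : ωₙ(f) ∈ V}` has strictly positive lower density. -/
def FreqUniversal {E : Type} [TopologicalSpace E] [AddCommMonoid E] [Module ℂ E]
    (ℙ : Measure t.Geodesic) (d : E → E → ℝ) (w : t.V → t.V → ℂ)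
    (f : t.V → E) : Prop :=
  t.Harmonic w f ∧
    ∀ V : Set (t.Geodesic → E), V.Nonempty → t.IsOpenL0 ℙ d V →
      0 < lowerDensity {n | 1 ≤ n ∧ t.omega f n ∈ V}

/-- The class `X(T,E)`: harmonic `f` such that for every nonempty open `V ⊆ L⁰(∂T,E)`
the set `{n : ωₙ(f) ∈ V}` has upper density one. -/
def ClassX {E : Type} [TopologicalSpace E] [AddCommMonoid E] [Module ℂ E]
    (ℙ : Measure t.Geodesic) (d : E → E → ℝ) (w : t.V → t.V → ℂ)
    (f : t.V → E) : Prop :=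
  t.Harmonic w f ∧
    ∀ V : Set (t.Geodesic → E), V.Nonempty → t.IsOpenL0 ℙ d V →
      upperDensity {n | 1 ≤ n ∧ t.omega f n ∈ V} = 1

end TreeSystem


section AuxDisjoint

open MeasureTheory Filter Topology

private lemma frac_triangle' {a b c : ℝ} (ha : 0 ≤ a) (hb : 0 ≤ b) (hc : 0 ≤ c)
    (h : a ≤ b + c) : a / (1 + a) ≤ b / (1 + b) + c / (1 + c) := by
  have h1 : (0:ℝ) < 1 + a := by linarith
  have h2 : (0:ℝ) < 1 + b := by linarith
  have h3 : (0:ℝ) < 1 + c := by linarith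
  rw [div_add_div _ _ (ne_of_gt h2) (ne_of_gt h3), div_le_div_iff₀ h1 (by positivity)]
  nlinarith [mul_nonneg hb hc, mul_nonneg (mul_nonneg hb hc) ha]

variable {α : Type} [MeasurableSpace α] {μ : Measure α}
variable {E : Type} [MetricSpace E] [TopologicalSpace.SeparableSpace E]

private lemma aemeasurable_of_opens' (ψ : α → E)
    (hψ : ∀ V : Set E, IsOpen V → NullMeasurableSet (ψ ⁻¹' V) μ) :
    @AEMeasurable α E (borel E) _ ψ μ := by
  haveI := UniformSpace.secondCountable_of_separable E
  borelize E
  have hb : ‹MeasurableSpace E› = MeasurableSpace.generateFrom {s : Set E | IsOpen s} :=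
    BorelSpace.measurable_eq
  have key : @Measurable (MeasureTheory.NullMeasurableSpace α μ) E _
      (MeasurableSpace.generateFrom {s : Set E | IsOpen s}) ψ :=
    measurable_generateFrom (fun s hs => hψ s hs)
  have hnm : NullMeasurable ψ μ := fun s hs => key (hb ▸ hs)
  exact hnm.aemeasurable

private lemma integrable_frac_dist' [IsFiniteMeasure μ] (ψ φ : α → E)
    (hψ : ∀ V : Set E, IsOpen V → NullMeasurableSet (ψ ⁻¹' V) μ)
    (hφ : ∀ V : Set E, IsOpen V → NullMeasurableSet (φ ⁻¹' V) μ) :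
    Integrable (fun e => dist (ψ e) (φ e) / (1 + dist (ψ e) (φ e))) μ := by
  haveI := UniformSpace.secondCountable_of_separable E
  borelize E
  have h1 := aemeasurable_of_opens' (μ := μ) ψ hψ
  have h2 := aemeasurable_of_opens' (μ := μ) φ hφ
  have hd : AEMeasurable (fun e => dist (ψ e) (φ e)) μ := by
    simp only [dist_edist]
    exact (h1.edist h2).ennreal_toReal
  have hF : AEMeasurable (fun e => dist (ψ e) (φ e) / (1 + dist (ψ e) (φ e))) μ :=
    hd.div (aemeasurable_const.add hd)
  refine Integrable.mono' (integrable_const (1:ℝ)) hF.aestronglyMeasurable ?_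
  filter_upwards with e
  have h0 : (0:ℝ) ≤ dist (ψ e) (φ e) := dist_nonneg
  rw [Real.norm_eq_abs, abs_of_nonneg (by positivity)]
  rw [div_le_one (by positivity)]; linarith

end AuxDisjoint

section AuxDensity

open MeasureTheory Filter Topology

private lemma partialCount_nonneg' (A : Set ℕ) (N : ℕ) : 0 ≤ partialCount A N :=
  Finset.sum_nonneg fun n _ => Set.indicator_nonneg (fun _ _ => zero_le_one) n

private lemma partialCount_add_le' {A B : Set ℕ} (h : Disjoint A B) (N : ℕ) :
    partialCount A N + partialCount B N ≤ N := by
  unfold partialCount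
  rw [← Finset.sum_add_distrib]
  have : ∑ n ∈ Finset.Icc 1 N,
      (A.indicator (fun _ => (1:ℝ)) n + B.indicator (fun _ => (1:ℝ)) n)
      ≤ ∑ _n ∈ Finset.Icc 1 N, (1:ℝ) := by
    refine Finset.sum_le_sum fun n _ => ?_
    by_cases hA : n ∈ A
    · have hB : n ∉ B := Set.disjoint_left.mp h hA
      simp [Set.indicator_of_mem hA, Set.indicator_of_notMem hB]
    · by_cases hB : n ∈ B <;>
        simp [Set.indicator_of_notMem hA, hB]
  calc _ ≤ _ := this
    _ = (N:ℝ) := by simp [Nat.card_Icc]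

private lemma density_contradiction' {A B : Set ℕ} (h : Disjoint A B)
    (hA : 0 < lowerDensity A) (hB : upperDensity B = 1) : False := by
  set a : ℕ → ℝ := fun N => partialCount A N / N with ha
  set b : ℕ → ℝ := fun N => partialCount B N / N with hb
  have ha0 : ∀ N, 0 ≤ a N := fun N => div_nonneg (partialCount_nonneg' A N) (Nat.cast_nonneg N)
  have hb0 : ∀ N, 0 ≤ b N := fun N => div_nonneg (partialCount_nonneg' B N) (Nat.cast_nonneg N)
  have hab : ∀ N, b N ≤ 1 - a N := by
    intro N
    rcases Nat.eq_zero_or_pos N with rfl | hN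
    · simp [ha, hb, partialCount]
    · have hNpos : (0:ℝ) < N := by exact_mod_cast hN
      have h1 : (partialCount B N + partialCount A N) / N ≤ 1 := by
        rw [div_le_one hNpos]
        have := partialCount_add_le' h N
        linarith
      rw [add_div] at h1
      simp only [ha, hb]
      linarith
  have hbdda : atTop.IsBoundedUnder (· ≥ ·) a := isBoundedUnder_of ⟨0, fun N => ha0 N⟩
  have hev : ∀ᶠ N in atTop, lowerDensity A / 2 < a N :=
    eventually_lt_of_lt_liminf (by rw [lowerDensity] at hA ⊢; linarith) hbdda
  have hev2 : ∀ᶠ N in atTop, b N ≤ 1 - lowerDensity A / 2 := by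
    filter_upwards [hev] with N hN
    have := hab N; linarith
  have hcob : atTop.IsCoboundedUnder (· ≤ ·) b :=
    (isBoundedUnder_of ⟨0, fun N => hb0 N⟩ :
      atTop.IsBoundedUnder (· ≥ ·) b).isCoboundedUnder_le
  have : upperDensity B ≤ 1 - lowerDensity A / 2 := limsup_le_of_le hcob hev2
  rw [hB] at this
  linarith

end AuxDensity

/-- For a nontrivial separable metrizable topological vector space `E`
over `ℂ`, the sets `U_FM(T,E)` and `X(T,E)` are disjoint. -/
theorem freqUniversal_disjoint_classX (t : TreeSystem)
    {E : Type} [MetricSpace E] [AddCommGroup E] [Module ℂ E]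
    [IsTopologicalAddGroup E] [ContinuousSMul ℂ E]
    [TopologicalSpace.SeparableSpace E] [Nontrivial E]
    (q : t.V → t.V → ℝ)
    (hq_pos : ∀ x, ∀ y ∈ t.children x, 0 < q x y)
    (hq_sum : ∀ x, ∑ᶠ y ∈ t.children x, q x y = 1)
    (w : t.V → t.V → ℂ)
    (hw_ne : ∀ x, ∀ y ∈ t.children x, w x y ≠ 0)
    (hw_sum : ∀ x, ∑ᶠ y ∈ t.children x, w x y = 1)
    (ℙ : MeasureTheory.Measure t.Geodesic) [MeasureTheory.IsProbabilityMeasure ℙ]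
    (hℙ : ∀ x, ℙ (t.Bx x) = ENNReal.ofReal (t.pathProb q (t.level x) x)) :
    {f : t.V → E | t.FreqUniversal ℙ dist w f} ∩ {f | t.ClassX ℙ dist w f} = ∅ := by
  classical
  rw [Set.eq_empty_iff_forall_notMem]
  rintro f ⟨hF, hX⟩
  -- two distinct constant functions
  obtain ⟨v, hv⟩ : ∃ v : E, v ≠ 0 := exists_ne 0
  set ψ₀ : t.Geodesic → E := fun _ => (0 : E) with hψ₀def
  set ψ₁ : t.Geodesic → E := fun _ => v with hψ₁def
  have hmeas_const : ∀ u : E, t.MMeas ℙ (fun _ : t.Geodesic => u) := by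
    intro u V hV
    by_cases h : u ∈ V
    · have : (fun _ : t.Geodesic => u) ⁻¹' V = Set.univ := by
        ext e; simp [h]
      rw [this]; exact MeasurableSet.univ.nullMeasurableSet
    · have : (fun _ : t.Geodesic => u) ⁻¹' V = ∅ := by
        ext e; simp [h]
      rw [this]; exact MeasurableSet.empty.nullMeasurableSet
  -- the triangle inequality for L0dist between MMeas functions
  have tri : ∀ ψ χ φ : t.Geodesic → E, t.MMeas ℙ ψ → t.MMeas ℙ χ → t.MMeas ℙ φ →
      t.L0dist ℙ dist ψ φ ≤ t.L0dist ℙ dist ψ χ + t.L0dist ℙ dist χ φ := by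
    intro ψ χ φ hψ hχ hφ
    have i1 := integrable_frac_dist' (μ := ℙ) ψ φ hψ hφ
    have i2 := integrable_frac_dist' (μ := ℙ) ψ χ hψ hχ
    have i3 := integrable_frac_dist' (μ := ℙ) χ φ hχ hφ
    have hmono := integral_mono i1 (i2.add i3) (fun e =>
      frac_triangle' dist_nonneg dist_nonneg dist_nonneg (dist_triangle (ψ e) (χ e) (φ e)))
    simp only [Pi.add_apply] at hmono
    rw [integral_add i2 i3] at hmono
    exact hmono
  -- symmetry
  have symm : ∀ ψ φ : t.Geodesic → E,
      t.L0dist ℙ dist ψ φ = t.L0dist ℙ dist φ ψ := by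
    intro ψ φ
    unfold TreeSystem.L0dist
    simp [dist_comm]
  set c : ℝ := dist (0 : E) v / (1 + dist (0 : E) v) with hcdef
  have hdv : 0 < dist (0 : E) v := dist_pos.mpr (Ne.symm hv)
  have hc : 0 < c := div_pos hdv (by linarith)
  have hc01 : t.L0dist ℙ dist ψ₀ ψ₁ = c := by
    unfold TreeSystem.L0dist
    simp [hψ₀def, hψ₁def, integral_const, measure_univ, hcdef]
  have hself : ∀ ψ : t.Geodesic → E, t.L0dist ℙ dist ψ ψ = 0 := by
    intro ψ; unfold TreeSystem.L0dist; simp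
  -- the two disjoint open balls
  set V₁ : Set (t.Geodesic → E) :=
    {φ | t.MMeas ℙ φ ∧ t.L0dist ℙ dist ψ₀ φ < c / 3} with hV₁def
  set V₂ : Set (t.Geodesic → E) :=
    {φ | t.MMeas ℙ φ ∧ t.L0dist ℙ dist ψ₁ φ < c / 3} with hV₂def
  have hne₁ : V₁.Nonempty := ⟨ψ₀, ⟨hmeas_const 0, by rw [hself]; linarith⟩⟩
  have hne₂ : V₂.Nonempty := ⟨ψ₁, ⟨hmeas_const v, by rw [hself]; linarith⟩⟩
  have hopen : ∀ ψ : t.Geodesic → E, t.MMeas ℙ ψ →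
      t.IsOpenL0 ℙ dist {φ | t.MMeas ℙ φ ∧ t.L0dist ℙ dist ψ φ < c / 3} := by
    intro ψ hψ
    constructor
    · exact fun φ hφ => hφ.1
    · rintro χ ⟨hχm, hχd⟩
      refine ⟨c / 3 - t.L0dist ℙ dist ψ χ, by linarith, ?_⟩
      intro φ hφm hd
      refine ⟨hφm, ?_⟩
      have := tri ψ χ φ hψ hχm hφm
      linarith
  have hopen₁ : t.IsOpenL0 ℙ dist V₁ := hopen ψ₀ (hmeas_const 0)
  have hopen₂ : t.IsOpenL0 ℙ dist V₂ := hopen ψ₁ (hmeas_const v)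
  -- disjointness of the corresponding sets of indices
  have hdisj : Disjoint {n | 1 ≤ n ∧ t.omega f n ∈ V₁} {n | 1 ≤ n ∧ t.omega f n ∈ V₂} := by
    rw [Set.disjoint_left]
    rintro n ⟨-, h1m, h1d⟩ ⟨-, h2m, h2d⟩
    have h01 := tri ψ₀ (t.omega f n) ψ₁ (hmeas_const 0) h1m (hmeas_const v)
    rw [symm (t.omega f n) ψ₁] at h01
    rw [hc01] at h01
    linarith
  exact density_contradiction' hdisj
    (hF.2 V₁ hne₁ hopen₁) (hX.2 V₂ hne₂ hopen₂)
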